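/- arXiv:2304.00790 — 2 statements merged into one kernel-verified Lean document; each statement's English description precedes it below -/
import Mathlib

section
/- Let h : ℝ → ℝ be differentiable and α : ℝ → ℝ be Lipschitz continuous with α(0) = 0 and α strictly increasing. If h(0) > 0 and h'(t) ≥ -α(h(t)) for all t ≥ 0, then h(t) > 0 for all t ≥ 0. -/
/-! While `h > 0` the Lipschitz bound `α(h) ≤ L h` (from `α 0 = 0`) turns the barrier condition
into the linear inequality `h' ≥ -L h`, so `h(t) e^{L t}` is nondecreasing. At a first time `c`
with `h c ≤ 0` this gives `0 < h 0 ≤ h c e^{L c} ≤ 0`. -/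

open Set Real

lemma LipschitzWith.le_mul_of_map_zero {α : ℝ → ℝ} {L : NNReal} (hα : LipschitzWith L α)
    (hα0 : α 0 = 0) {x : ℝ} (hx : 0 ≤ x) : α x ≤ L * x := by
  have hdist := hα.dist_le_mul x 0
  rw [Real.dist_eq, Real.dist_eq, hα0, sub_zero, sub_zero, abs_of_nonneg hx] at hdist
  exact (le_abs_self _).trans hdist

lemma monotoneOn_mul_exp_of_neg_mul_le_deriv {f f' : ℝ → ℝ} {K a b : ℝ}
    (hf : ContinuousOn f (Icc a b)) (hf' : ∀ s ∈ Ioo a b, HasDerivAt f (f' s) s)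
    (hbound : ∀ s ∈ Ioo a b, -K * f s ≤ f' s) :
    MonotoneOn (fun s => f s * exp (K * s)) (Icc a b) := by
  have hexp : ∀ s, HasDerivAt (fun s => exp (K * s)) (exp (K * s) * K) s := fun s =>
    ((hasDerivAt_id s).const_mul K).exp.congr_deriv (by simp)
  refine monotoneOn_of_hasDerivWithinAt_nonneg
    (f' := fun s => f' s * exp (K * s) + f s * (exp (K * s) * K)) (convex_Icc a b)
    (hf.mul (continuous_exp.comp (continuous_const.mul continuous_id)).continuousOn)
    (fun s hs => ?_) (fun s hs => ?_)
  · rw [interior_Icc] at hs ⊢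
    exact ((hf' s hs).mul (hexp s)).hasDerivWithinAt
  · rw [interior_Icc] at hs
    have hlin := hbound s hs
    have hexp_pos := exp_pos (K * s)
    nlinarith

lemma exists_first_nonpos {f : ℝ → ℝ} {a b : ℝ} (hf : ContinuousOn f (Icc a b))
    (hab : a ≤ b) (hb : f b ≤ 0) : ∃ c ∈ Icc a b, f c ≤ 0 ∧ ∀ s ∈ Ico a c, 0 < f s := by
  set S := {s ∈ Icc a b | f s ≤ 0}
  have hS : IsClosed S := hf.preimage_isClosed_of_isClosed isClosed_Icc isClosed_Iic
  have hSne : S.Nonempty := ⟨b, ⟨hab, le_rfl⟩, hb⟩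
  have hSbdd : BddBelow S := ⟨a, fun s hs => hs.1.1⟩
  obtain ⟨hcab, hc⟩ := hS.csInf_mem hSne hSbdd
  refine ⟨sInf S, hcab, hc, fun s hs => ?_⟩
  by_contra! hfs
  exact (csInf_le hSbdd ⟨⟨hs.1, hs.2.le.trans hcab.2⟩, hfs⟩).not_gt hs.2

theorem cbf_forward_invariance_general_general (h : ℝ → ℝ) (hdiff : Differentiable ℝ h)
    (α : ℝ → ℝ) (L : NNReal) (hLip : LipschitzWith L α)
    (hα0 : α 0 = 0)
    (h0 : 0 < h 0)
    (hcbf : ∀ t : ℝ, 0 ≤ t → deriv h t ≥ -α (h t)) :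
    ∀ t : ℝ, 0 ≤ t → 0 < h t := by
  intro t ht
  by_contra! hneg
  obtain ⟨c, hc, hhc, hpos⟩ := exists_first_nonpos hdiff.continuous.continuousOn ht hneg
  have hmono : MonotoneOn (fun s => h s * exp (L * s)) (Icc 0 c) :=
    monotoneOn_mul_exp_of_neg_mul_le_deriv hdiff.continuous.continuousOn
      (fun s _ => (hdiff s).hasDerivAt) fun s hs => by
        have hαle := hLip.le_mul_of_map_zero hα0 (hpos s ⟨hs.1.le, hs.2⟩).le
        linarith [hcbf s hs.1.le]
  have hgrowth := hmono ⟨le_rfl, hc.1⟩ ⟨hc.1, le_rfl⟩ hc.1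
  simp only [mul_zero, exp_zero, mul_one] at hgrowth
  nlinarith [exp_pos (L * c)]

theorem cbf_forward_invariance_general (h : ℝ → ℝ) (hdiff : Differentiable ℝ h)
    (α : ℝ → ℝ) (L : NNReal) (hLip : LipschitzWith L α)
    (hα0 : α 0 = 0) (hmono : StrictMono α)
    (h0 : 0 < h 0)
    (hcbf : ∀ t : ℝ, 0 ≤ t → deriv h t ≥ -α (h t)) :
    ∀ t : ℝ, 0 ≤ t → 0 < h t :=
  cbf_forward_invariance_general_general h hdiff α L hLip hα0 h0 hcbf
end

section
/- Let h₀ : ℝ → ℝ be twice differentiable, k₁, k₂ > 0, and define Ψ₁(t) = h₀'(t) + k₁ * h₀(t). If Ψ₁'(t) + k₂ * Ψ₁(t) ≥ 0 for all t ≥ 0, Ψ₁(0) ≥ 0, and h₀(0) ≥ 0, then h₀(t) ≥ 0 for all t ≥ 0. -/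
lemma hocbf_first_order (f : ℝ → ℝ) (hf : Differentiable ℝ f) (k : ℝ)
    (h : ∀ t : ℝ, 0 ≤ t → deriv f t + k * f t ≥ 0) (h0 : f 0 ≥ 0) :
    ∀ t : ℝ, 0 ≤ t → f t ≥ 0 := by
  set g : ℝ → ℝ := fun t => Real.exp (k * t) * f t with hg
  have hgd : ∀ t : ℝ, HasDerivAt g (Real.exp (k * t) * (deriv f t + k * f t)) t := by
    intro t
    have h1 : HasDerivAt (fun t => Real.exp (k * t)) (k * Real.exp (k * t)) t := by
      have := (Real.hasDerivAt_exp (k * t)).comp t ((hasDerivAt_id t).const_mul k)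
      exact this.congr_deriv (by ring)
    have := h1.mul (hf t).hasDerivAt
    exact this.congr_deriv (by ring)
  have hmono : MonotoneOn g (Set.Ici (0:ℝ)) := by
    apply monotoneOn_of_deriv_nonneg (convex_Ici 0)
    · exact (Continuous.mul (by continuity) hf.continuous).continuousOn
    · intro t ht
      exact ((hgd t).differentiableAt).differentiableWithinAt
    · intro t ht
      rw [interior_Ici] at ht
      rw [(hgd t).deriv]
      exact mul_nonneg (Real.exp_nonneg _) (h t ht.le)
  intro t ht
  have := hmono (Set.self_mem_Ici) (Set.mem_Ici.mpr ht) ht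
  have hg0 : g 0 = f 0 := by simp [hg]
  have h2 : 0 ≤ Real.exp (k * t) * f t := by
    rw [hg0] at this; simpa [hg] using le_trans h0 this
  exact (mul_nonneg_iff_of_pos_left (Real.exp_pos _)).mp h2

theorem hocbf_second_order (h₀ : ℝ → ℝ)
    (hdiff : Differentiable ℝ h₀) (hdiff' : Differentiable ℝ (deriv h₀))
    (k₁ k₂ : ℝ) (hk₁ : 0 < k₁) (hk₂ : 0 < k₂)
    (Ψ₁ : ℝ → ℝ) (hΨ₁ : Ψ₁ = fun t => deriv h₀ t + k₁ * h₀ t)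
    (hcbf : ∀ t : ℝ, 0 ≤ t → deriv Ψ₁ t + k₂ * Ψ₁ t ≥ 0)
    (hΨ₁0 : Ψ₁ 0 ≥ 0) (h₀0 : h₀ 0 ≥ 0) :
    ∀ t : ℝ, 0 ≤ t → h₀ t ≥ 0 := by
  have hΨdiff : Differentiable ℝ Ψ₁ := by
    rw [hΨ₁]; exact hdiff'.add (hdiff.const_mul k₁)
  have hΨnn : ∀ t : ℝ, 0 ≤ t → Ψ₁ t ≥ 0 :=
    hocbf_first_order Ψ₁ hΨdiff k₂ hcbf hΨ₁0
  apply hocbf_first_order h₀ hdiff k₁ _ h₀0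
  intro t ht
  have := hΨnn t ht
  rw [hΨ₁] at this
  simpa using this
end
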